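/- Let (A, R) be a two-player zero-sum normal-form game with A = A₁ × A₂ for finite nonempty action sets A₁, A₂, and let π be a pure strategy profile. Then the set of Nash equilibria of (A, R) equals {π} if and only if the set of coarse correlated equilibria of (A, R) equals {δ_π}, where δ_π is the point-mass distribution at π. -/
import Mathlib


open Finset

/-- A mixed strategy: nonnegative weights summing to one. -/
def IsMixed {α : Type*} [Fintype α] (p : α → ℝ) : Prop :=
  (∀ a, 0 ≤ p a) ∧ ∑ a, p a = 1

/-- The point-mass distribution at `a`. -/
def pmass {α : Type*} [DecidableEq α] (a : α) : α → ℝ :=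
  fun x => if x = a then 1 else 0

/-- Expected reward of a mixed strategy profile `(p, q)` in the game with reward `R`. -/
def expR {A₁ A₂ : Type*} [Fintype A₁] [Fintype A₂]
    (R : A₁ × A₂ → ℝ) (p : A₁ → ℝ) (q : A₂ → ℝ) : ℝ :=
  ∑ a₁, ∑ a₂, p a₁ * q a₂ * R (a₁, a₂)

/-- `(p, q)` is a (mixed) Nash equilibrium of the zero-sum game with reward `R`
(player 1 minimizes `R`, player 2 maximizes `R`). -/
def IsNE {A₁ A₂ : Type*} [Fintype A₁] [Fintype A₂] [DecidableEq A₁] [DecidableEq A₂]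
    (R : A₁ × A₂ → ℝ) (p : A₁ → ℝ) (q : A₂ → ℝ) : Prop :=
  IsMixed p ∧ IsMixed q ∧
  (∀ a₂, expR R p (pmass a₂) ≤ expR R p q) ∧
  (∀ a₁, expR R p q ≤ expR R (pmass a₁) q)

/-- The set of all mixed Nash equilibria of the game with reward `R`. -/
def NESet {A₁ A₂ : Type*} [Fintype A₁] [Fintype A₂] [DecidableEq A₁] [DecidableEq A₂]
    (R : A₁ × A₂ → ℝ) : Set ((A₁ → ℝ) × (A₂ → ℝ)) :=
  {pq | IsNE R pq.1 pq.2}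

/-- The pure strategy profile `π` is a strict Nash equilibrium of the game with reward `R`. -/
def IsStrictNE {A₁ A₂ : Type*} (R : A₁ × A₂ → ℝ) (π : A₁ × A₂) : Prop :=
  (∀ a₂, a₂ ≠ π.2 → R (π.1, a₂) < R π) ∧
  (∀ a₁, a₁ ≠ π.1 → R π < R (a₁, π.2))

/-- A distribution `μ` on joint actions is a coarse correlated equilibrium of the
zero-sum game with reward `R` (player 1 minimizes, player 2 maximizes): neither player
can improve by committing to a fixed action. -/
def IsCCE {A₁ A₂ : Type*} [Fintype A₁] [Fintype A₂]
    (R : A₁ × A₂ → ℝ) (μ : A₁ × A₂ → ℝ) : Prop :=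
  (∀ a, 0 ≤ μ a) ∧ (∑ a, μ a = 1) ∧
  (∀ a₁' : A₁, ∑ a, μ a * R a ≤ ∑ a, μ a * R (a₁', a.2)) ∧
  (∀ a₂' : A₂, ∑ a, μ a * R (a.1, a₂') ≤ ∑ a, μ a * R a)

/-- The set of all coarse correlated equilibria of the game with reward `R`. -/
def CCESet {A₁ A₂ : Type*} [Fintype A₁] [Fintype A₂]
    (R : A₁ × A₂ → ℝ) : Set (A₁ × A₂ → ℝ) :=
  {μ | IsCCE R μ}

set_option linter.unusedSectionVars false

section Aux
variable {A₁ A₂ : Type*} [Fintype A₁] [Fintype A₂] [DecidableEq A₁] [DecidableEq A₂]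

lemma isMixed_pmass {α : Type*} [Fintype α] [DecidableEq α] (a : α) : IsMixed (pmass a) := by
  refine ⟨fun x => ?_, ?_⟩
  · unfold pmass; split_ifs <;> norm_num
  · simp [pmass]

lemma expR_pmass_left (R : A₁ × A₂ → ℝ) (b : A₁) (q : A₂ → ℝ) :
    expR R (pmass b) q = ∑ a₂, q a₂ * R (b, a₂) := by
  simp [expR, pmass, ite_mul]

lemma expR_pmass_right (R : A₁ × A₂ → ℝ) (p : A₁ → ℝ) (b : A₂) :
    expR R p (pmass b) = ∑ a₁, p a₁ * R (a₁, b) := by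
  simp [expR, pmass, mul_ite]

lemma expR_pmass_pmass (R : A₁ × A₂ → ℝ) (b₁ : A₁) (b₂ : A₂) :
    expR R (pmass b₁) (pmass b₂) = R (b₁, b₂) := by
  rw [expR_pmass_left]; simp [pmass, ite_mul]

/-- The product of a Nash equilibrium's strategies is a CCE. -/
lemma prod_isCCE (R : A₁ × A₂ → ℝ) {p : A₁ → ℝ} {q : A₂ → ℝ}
    (h : IsNE R p q) : IsCCE R (fun a => p a.1 * q a.2) := by
  obtain ⟨hp, hq, h1, h2⟩ := h
  have key : ∑ a : A₁ × A₂, (p a.1 * q a.2) * R a = expR R p q := by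
    simp [Fintype.sum_prod_type, expR]
  refine ⟨fun a => mul_nonneg (hp.1 _) (hq.1 _), ?_, fun a₁' => ?_, fun a₂' => ?_⟩
  · simp [Fintype.sum_prod_type, ← Finset.mul_sum, hq.2, ← Finset.sum_mul, hp.2]
  · rw [key]
    have : ∑ a : A₁ × A₂, (p a.1 * q a.2) * R (a₁', a.2) = expR R (pmass a₁') q := by
      rw [expR_pmass_left]
      rw [Fintype.sum_prod_type]
      rw [Finset.sum_comm]
      congr 1; ext a₂
      simp only [mul_assoc]
      rw [← Finset.sum_mul, hp.2, one_mul]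
    rw [this]; exact h2 a₁'
  · rw [key]
    have : ∑ a : A₁ × A₂, (p a.1 * q a.2) * R (a.1, a₂') = expR R p (pmass a₂') := by
      rw [expR_pmass_right, Fintype.sum_prod_type]
      congr 1; ext a₁
      have e : ∀ y : A₂, p a₁ * q y * R (a₁, a₂') = (p a₁ * R (a₁, a₂')) * q y :=
        fun y => by ring
      rw [Finset.sum_congr rfl fun y _ => e y, ← Finset.mul_sum, hq.2, mul_one]
    rw [this]; exact h1 a₂'

/-- Marginals of a CCE form a Nash equilibrium in a zero-sum game. -/
lemma marginals_isNE (R : A₁ × A₂ → ℝ) {μ : A₁ × A₂ → ℝ} (h : IsCCE R μ) :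
    IsNE R (fun a₁ => ∑ a₂, μ (a₁, a₂)) (fun a₂ => ∑ a₁, μ (a₁, a₂)) := by
  obtain ⟨hpos, hsum, hc1, hc2⟩ := h
  have hpm : IsMixed (fun a₁ => ∑ a₂, μ (a₁, a₂)) := by
    refine ⟨fun a₁ => Finset.sum_nonneg fun _ _ => hpos _, ?_⟩
    rw [← Fintype.sum_prod_type]; exact hsum
  have hqm : IsMixed (fun a₂ => ∑ a₁, μ (a₁, a₂)) := by
    refine ⟨fun a₂ => Finset.sum_nonneg fun _ _ => hpos _, ?_⟩
    rw [Finset.sum_comm, ← Fintype.sum_prod_type]; exact hsum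
  have eL : ∀ a₁' : A₁,
      expR R (pmass a₁') (fun a₂ => ∑ a₁, μ (a₁, a₂)) = ∑ a, μ a * R (a₁', a.2) := by
    intro a₁'
    rw [expR_pmass_left, Fintype.sum_prod_type, Finset.sum_comm]
    congr 1; ext a₂; rw [Finset.sum_mul]
  have eR : ∀ a₂' : A₂,
      expR R (fun a₁ => ∑ a₂, μ (a₁, a₂)) (pmass a₂') = ∑ a, μ a * R (a.1, a₂') := by
    intro a₂'
    rw [expR_pmass_right, Fintype.sum_prod_type]
    congr 1; ext a₁; rw [Finset.sum_mul]
  have exp2 : expR R (fun a₁ => ∑ a₂, μ (a₁, a₂)) (fun a₂ => ∑ a₁, μ (a₁, a₂))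
      = ∑ a₁, (∑ a₂, μ (a₁, a₂)) * expR R (pmass a₁) (fun a₂ => ∑ a₁, μ (a₁, a₂)) := by
    rw [expR]
    refine Finset.sum_congr rfl fun a₁ _ => ?_
    rw [expR_pmass_left, Finset.mul_sum]
    exact Finset.sum_congr rfl fun a₂ _ => by ring
  have exp1 : expR R (fun a₁ => ∑ a₂, μ (a₁, a₂)) (fun a₂ => ∑ a₁, μ (a₁, a₂))
      = ∑ a₂, (∑ a₁, μ (a₁, a₂)) * expR R (fun a₁ => ∑ a₂, μ (a₁, a₂)) (pmass a₂) := by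
    rw [expR, Finset.sum_comm]
    refine Finset.sum_congr rfl fun a₂ _ => ?_
    rw [expR_pmass_right, Finset.mul_sum]
    exact Finset.sum_congr rfl fun a₁ _ => by ring
  set v : ℝ := ∑ a, μ a * R a with hv
  have hub : expR R (fun a₁ => ∑ a₂, μ (a₁, a₂)) (fun a₂ => ∑ a₁, μ (a₁, a₂)) ≤ v := by
    rw [exp1]
    calc ∑ a₂, (∑ a₁, μ (a₁, a₂)) * expR R (fun a₁ => ∑ a₂, μ (a₁, a₂)) (pmass a₂)
        ≤ ∑ a₂, (∑ a₁, μ (a₁, a₂)) * v := by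
          refine Finset.sum_le_sum fun a₂ _ => ?_
          exact mul_le_mul_of_nonneg_left (by rw [eR]; exact hc2 a₂) (hqm.1 a₂)
      _ = v := by rw [← Finset.sum_mul, hqm.2, one_mul]
  have hlb : v ≤ expR R (fun a₁ => ∑ a₂, μ (a₁, a₂)) (fun a₂ => ∑ a₁, μ (a₁, a₂)) := by
    rw [exp2]
    calc v = ∑ a₁, (∑ a₂, μ (a₁, a₂)) * v := by rw [← Finset.sum_mul, hpm.2, one_mul]
      _ ≤ _ := by
          refine Finset.sum_le_sum fun a₁ _ => ?_
          exact mul_le_mul_of_nonneg_left (by rw [eL]; exact hc1 a₁) (hpm.1 a₁)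
  refine ⟨hpm, hqm, fun a₂ => ?_, fun a₁ => ?_⟩
  · exact le_trans (by rw [eR]; exact hc2 a₂) hlb
  · exact le_trans hub (by rw [eL]; exact hc1 a₁)

end Aux

/-- A pure strategy profile `π` is the unique mixed Nash equilibrium of a finite
two-player zero-sum game iff the point mass `δ_π` is its unique coarse correlated
equilibrium. -/
theorem unique_NE_iff_unique_CCE {A₁ A₂ : Type*} [Fintype A₁] [Fintype A₂]
    [DecidableEq A₁] [DecidableEq A₂] [Nonempty A₁] [Nonempty A₂]
    (R : A₁ × A₂ → ℝ) (π : A₁ × A₂) :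
    NESet R = {(pmass π.1, pmass π.2)} ↔ CCESet R = {pmass π} := by
  have hprod : (fun a : A₁ × A₂ => pmass π.1 a.1 * pmass π.2 a.2) = pmass π := by
    funext a
    by_cases h1 : a.1 = π.1 <;> by_cases h2 : a.2 = π.2 <;>
      simp [pmass, Prod.ext_iff, h1, h2]
  constructor
  · intro h
    have hπNE : IsNE R (pmass π.1) (pmass π.2) := by
      have : ((pmass π.1, pmass π.2) : (A₁ → ℝ) × (A₂ → ℝ)) ∈ NESet R := by
        rw [h]; rfl
      exact this
    ext μ
    simp only [Set.mem_singleton_iff]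
    constructor
    · intro hμ
      have hpos := hμ.1
      have hNE := marginals_isNE R hμ
      have hmem : ((fun a₁ => ∑ a₂, μ (a₁, a₂)), fun a₂ => ∑ a₁, μ (a₁, a₂)) ∈ NESet R := hNE
      rw [h, Set.mem_singleton_iff, Prod.mk.injEq] at hmem
      obtain ⟨hp, hq⟩ := hmem
      have hrow : ∀ a₁, (∑ a₂, μ (a₁, a₂)) = pmass π.1 a₁ := fun a₁ => congrFun hp a₁
      have hcol : ∀ a₂, (∑ a₁, μ (a₁, a₂)) = pmass π.2 a₂ := fun a₂ => congrFun hq a₂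
      have hzero_row : ∀ a₁, a₁ ≠ π.1 → ∀ a₂, μ (a₁, a₂) = 0 := by
        intro a₁ hne a₂
        have hs : (∑ a₂, μ (a₁, a₂)) = 0 := by rw [hrow]; simp [pmass, hne]
        exact (Finset.sum_eq_zero_iff_of_nonneg (fun x _ => hpos (a₁, x))).mp hs a₂
          (Finset.mem_univ _)
      have hzero_col : ∀ a₂, a₂ ≠ π.2 → ∀ a₁, μ (a₁, a₂) = 0 := by
        intro a₂ hne a₁
        have hs : (∑ a₁, μ (a₁, a₂)) = 0 := by rw [hcol]; simp [pmass, hne]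
        exact (Finset.sum_eq_zero_iff_of_nonneg (fun x _ => hpos (x, a₂))).mp hs a₁
          (Finset.mem_univ _)
      have hone : μ (π.1, π.2) = 1 := by
        have hs := hrow π.1
        rw [Finset.sum_eq_single π.2 (fun b _ hb => hzero_col b hb π.1)
          (fun hh => absurd (Finset.mem_univ _) hh)] at hs
        simpa [pmass] using hs
      funext a
      by_cases ha : a = π
      · rw [ha]
        have : (π.1, π.2) = π := Prod.mk.eta
        rw [← this, hone]
        simp [pmass]
      · have hcases : a.1 ≠ π.1 ∨ a.2 ≠ π.2 := by
          by_contra hc; push_neg at hc; exact ha (Prod.ext hc.1 hc.2)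
        have hz : μ a = 0 := by
          rcases hcases with hh | hh
          · simpa using hzero_row a.1 hh a.2
          · simpa using hzero_col a.2 hh a.1
        rw [hz]; simp [pmass, ha]
    · intro hμ
      rw [hμ, ← hprod]
      exact prod_isCCE R hπNE
  · intro h
    have hπCCE : IsCCE R (pmass π) := by
      have : pmass π ∈ CCESet R := by rw [h]; rfl
      exact this
    obtain ⟨-, -, hc1, hc2⟩ := hπCCE
    have epure : ∑ a, pmass π a * R a = R π := by simp [pmass, ite_mul]
    have e1 : ∀ a₁' : A₁, ∑ a, pmass π a * R (a₁', a.2) = R (a₁', π.2) := by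
      intro a₁'; simp [pmass, ite_mul]
    have e2 : ∀ a₂' : A₂, ∑ a, pmass π a * R (a.1, a₂') = R (π.1, a₂') := by
      intro a₂'; simp [pmass, ite_mul]
    have hπNE : IsNE R (pmass π.1) (pmass π.2) := by
      refine ⟨isMixed_pmass _, isMixed_pmass _, fun a₂ => ?_, fun a₁ => ?_⟩
      · rw [expR_pmass_pmass, expR_pmass_pmass]
        have := hc2 a₂
        rw [epure, e2] at this
        simpa using this
      · rw [expR_pmass_pmass, expR_pmass_pmass]
        have := hc1 a₁
        rw [epure, e1] at this
        simpa using this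
    ext pq
    simp only [Set.mem_singleton_iff]
    constructor
    · intro hpq
      have hcce : (fun a : A₁ × A₂ => pq.1 a.1 * pq.2 a.2) ∈ CCESet R := prod_isCCE R hpq
      rw [h, Set.mem_singleton_iff] at hcce
      have hq2 : IsMixed pq.2 := hpq.2.1
      have hp2 : IsMixed pq.1 := hpq.1
      have hp : pq.1 = pmass π.1 := by
        funext a₁
        have h1 : pq.1 a₁ = ∑ a₂, pq.1 a₁ * pq.2 a₂ := by
          rw [← Finset.mul_sum, hq2.2, mul_one]
        rw [h1, Finset.sum_congr rfl fun a₂ _ => congrFun hcce (a₁, a₂)]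
        by_cases hh : a₁ = π.1 <;> simp [pmass, Prod.ext_iff, hh]
      have hq : pq.2 = pmass π.2 := by
        funext a₂
        have h1 : pq.2 a₂ = ∑ a₁, pq.1 a₁ * pq.2 a₂ := by
          rw [← Finset.sum_mul, hp2.2, one_mul]
        rw [h1, Finset.sum_congr rfl fun a₁ _ => congrFun hcce (a₁, a₂)]
        by_cases hh : a₂ = π.2 <;> simp [pmass, Prod.ext_iff, hh]
      exact Prod.ext hp hq
    · intro hpq
      rw [hpq]
      exact hπNE
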